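/- arXiv:2605.09406 — 10 statements merged into one kernel-verified Lean document; each statement's English description precedes it below -/
import Mathlib

section
/- For real numbers $t_1, t_2, t_5$ with $1 \geq t_1 \geq t_2 \geq t_5 > 0$ and $t_1 + t_5 < 1$, one has $\frac{1}{2}(t_1^2 + t_2^2 + 3t_5^2) + (1 - t_1 + t_2 - t_5)(1 - t_2 - t_5) \geq \frac{1}{2}$, with equality when $t_1 = t_2 = t_5 = \frac{1}{3}$. -/
theorem stmt_0 (t1 t2 t5 : ℝ) (h1 : 1 ≥ t1) (h2 : t1 ≥ t2) (h3 : t2 ≥ t5)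
    (h4 : t5 > 0) (h5 : t1 + t5 < 1) :
    (1/2) * (t1^2 + t2^2 + 3 * t5^2) + (1 - t1 + t2 - t5) * (1 - t2 - t5) ≥ 1/2 ∧
    ((t1 = 1/3 ∧ t2 = 1/3 ∧ t5 = 1/3) →
      (1/2) * (t1^2 + t2^2 + 3 * t5^2) + (1 - t1 + t2 - t5) * (1 - t2 - t5) = 1/2) := by
  constructor
  · nlinarith [mul_nonneg (sub_nonneg.2 h2) (sub_nonneg.2 h3), sq_nonneg (t2 - t5),
      sq_nonneg (t1 + 2*t5 - 1)]
  · rintro ⟨rfl, rfl, rfl⟩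
    norm_num
end

section
/- For all real numbers $t_1, t_2, t_3$, one has $\frac{\sqrt{3}}{4}t_1^2 + \frac{\sqrt{3}}{4}t_2^2 + \frac{\sqrt{3}}{4}\left(1 + \frac{\sqrt{3}}{3} - t_1 - \frac{1}{2}t_2\right)^2 > \frac{\sqrt{3}}{4}$. -/
theorem stmt_5 (t1 t2 : ℝ) :
    Real.sqrt 3 / 4 * t1^2 + Real.sqrt 3 / 4 * t2^2 +
      Real.sqrt 3 / 4 * (1 + Real.sqrt 3 / 3 - t1 - (1/2) * t2)^2 >
      Real.sqrt 3 / 4 := by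
  set s := Real.sqrt 3 with hsdef
  have hs : s ^ 2 = 3 := Real.sq_sqrt (by norm_num)
  have h1 : (11:ℝ)/8 < s := by nlinarith [Real.sqrt_nonneg 3]
  have key : t1^2 + t2^2 + (1 + s / 3 - t1 - (1/2) * t2)^2 > 1 := by
    nlinarith [sq_nonneg (t1 + t2/4 - (1+s/3)/2), sq_nonneg (t2 - 2*(1+s/3)/9)]
  have hpos : 0 < s / 4 := by linarith
  nlinarith [mul_pos hpos (by linarith : (0:ℝ) < t1^2 + t2^2 + (1 + s / 3 - t1 - (1/2) * t2)^2 - 1)]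
end

section
/- For real numbers $t_1$ with $0 < t_1 < \frac{2}{5}$, one has $\frac{\sqrt{3}}{4}t_1^2 + (1 - t_1)\left(1 - \frac{\sqrt{3}}{2}t_1\right) \geq \frac{3}{5} - \frac{2\sqrt{3}}{25} > \frac{\sqrt{3}}{4}$. -/
theorem stmt_7 (t1 : ℝ) (h1 : 0 < t1) (h2 : t1 < 2/5) :
    Real.sqrt 3 / 4 * t1^2 + (1 - t1) * (1 - Real.sqrt 3 / 2 * t1)
      ≥ 3/5 - 2 * Real.sqrt 3 / 25 ∧
    3/5 - 2 * Real.sqrt 3 / 25 > Real.sqrt 3 / 4 := by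
  have hs2 : Real.sqrt 3 ^ 2 = 3 := Real.sq_sqrt (by norm_num)
  have hs1 : (1:ℝ) < Real.sqrt 3 := by nlinarith [Real.sqrt_nonneg 3]
  have hs3 : Real.sqrt 3 < 1.74 := by nlinarith [Real.sqrt_nonneg 3]
  constructor
  · nlinarith [mul_nonneg (mul_nonneg (sub_nonneg.2 h2.le) (sub_nonneg.2 h2.le)) (Real.sqrt_nonneg 3), sq_nonneg (t1 - 2/5)]
  · nlinarith
end

section
/- For real numbers $t_1, t_2, t_4$ with $1 \geq t_1 \geq t_2 \geq t_4 > 0$, $t_1 \geq \frac{\sqrt{3}}{3}$, $t_1 + \frac{1}{2}t_2 < 1$, and $t_1 + t_4 \geq 1$, one has $\frac{\sqrt{3}}{4}(t_1^2 + t_2^2 + 2t_4^2) + \left(1 - t_1 - \frac{1}{4}t_2 - \frac{3}{4}t_4 + \frac{\sqrt{3}}{6}\right)\left(1 - \frac{\sqrt{3}}{2}t_2 - \frac{\sqrt{3}}{2}t_4\right) \geq \frac{\sqrt{3}}{3} - \frac{1}{8} > \frac{\sqrt{3}}{4}$. -/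
theorem stmt_10 (t1 t2 t4 : ℝ) (h1 : 1 ≥ t1) (h2 : t1 ≥ t2) (h3 : t2 ≥ t4)
    (h4 : t4 > 0) (h5 : Real.sqrt 3 / 3 ≤ t1)
    (h6 : t1 + (1/2) * t2 < 1) (h7 : t1 + t4 ≥ 1) :
    Real.sqrt 3 / 4 * (t1^2 + t2^2 + 2 * t4^2) +
        (1 - t1 - (1/4) * t2 - (3/4) * t4 + Real.sqrt 3 / 6) *
          (1 - Real.sqrt 3 / 2 * t2 - Real.sqrt 3 / 2 * t4)
      ≥ Real.sqrt 3 / 3 - 1/8 ∧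
    Real.sqrt 3 / 3 - 1/8 > Real.sqrt 3 / 4 := by
  have hs : Real.sqrt 3 ^ 2 = 3 := Real.sq_sqrt (by norm_num)
  have hnn := Real.sqrt_nonneg 3
  have hl : (1.7:ℝ) < Real.sqrt 3 := by nlinarith
  set s := Real.sqrt 3 with hsdef
  constructor
  · have key : s / 4 * (t1^2 + t2^2 + 2 * t4^2) +
        (1 - t1 - (1/4) * t2 - (3/4) * t4 + s / 6) *
          (1 - s / 2 * t2 - s / 2 * t4)
        = (s / 3 - 1/8)
          + s/8 * (2*(t1 + t2 + t4 - 5/4 - s/12)^2 + (t2 - 1/4 - s/12)^2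
              + 5*(t4 - 1/4 - s/12)^2)
          + (3*s - 5)/16 * (t2 - t4) + (5*s - 7)/8 * (t1 + t4 - 1) := by
      linear_combination (-s/144 - t2/48 + t4/16 + t1/24 - 1/12) * hs
    rw [key]
    have p1 : s/8 * (2*(t1 + t2 + t4 - 5/4 - s/12)^2 + (t2 - 1/4 - s/12)^2
        + 5*(t4 - 1/4 - s/12)^2) ≥ 0 := by positivity
    have p2 : (3*s - 5)/16 * (t2 - t4) ≥ 0 := by
      apply mul_nonneg (by nlinarith) (by linarith)
    have p3 : (5*s - 7)/8 * (t1 + t4 - 1) ≥ 0 := by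
      apply mul_nonneg (by nlinarith) (by linarith)
    linarith
  · nlinarith
end

section
/- For real numbers $t_1, t_2, t_3, t_4$ with $1 \geq t_1 \geq t_2 \geq t_3 \geq t_4 > 0$, $\frac{\sqrt{3}}{3} \leq t_1$, $t_1 + \frac{1}{2}t_2 < 1$, and $t_1 + t_3 < 1$, one has $\frac{\sqrt{3}}{4}(t_1^2 + t_2^2 + t_3^2 + t_4^2) + \left(1 - t_1 + \frac{1}{4}t_2 - \frac{3}{4}t_4 + \frac{\sqrt{3}}{6}\right)\left(1 - \frac{\sqrt{3}}{2}t_2 - \frac{\sqrt{3}}{2}t_4\right) \geq 2 - \frac{31\sqrt{3}}{36} > \frac{\sqrt{3}}{4}$. -/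
set_option maxHeartbeats 1000000

theorem stmt_11 (t1 t2 t3 t4 : ℝ) (h1 : 1 ≥ t1) (h2 : t1 ≥ t2) (h3 : t2 ≥ t3)
    (h4 : t3 ≥ t4) (h5 : t4 > 0) (h6 : Real.sqrt 3 / 3 ≤ t1)
    (h7 : t1 + (1/2) * t2 < 1) (h8 : t1 + t3 < 1) :
    Real.sqrt 3 / 4 * (t1^2 + t2^2 + t3^2 + t4^2) +
        (1 - t1 + (1/4) * t2 - (3/4) * t4 + Real.sqrt 3 / 6) *
          (1 - Real.sqrt 3 / 2 * t2 - Real.sqrt 3 / 2 * t4)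
      ≥ 2 - 31 * Real.sqrt 3 / 36 ∧
    2 - 31 * Real.sqrt 3 / 36 > Real.sqrt 3 / 4 := by
  have hs : Real.sqrt 3 ^ 2 = 3 := Real.sq_sqrt (by norm_num)
  have hs1 : (1.7:ℝ) < Real.sqrt 3 := by
    nlinarith [hs, Real.sqrt_nonneg 3]
  have hs2 : Real.sqrt 3 < 1.74 := by
    nlinarith [hs, Real.sqrt_nonneg 3]
  set s := Real.sqrt 3 with hsdef
  refine ⟨?_, by nlinarith⟩
  -- exact SOS certificate:
  -- F - m = s/8*(2d1+d2+d4)^2 + s/4*d3^2 + s/2*d4^2 + d1*(s-3/2-s*d1/4) + (d3-d4)/3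
  -- with d1 = t1 - s/3, d2 = t2 - (2-8s/9), d3 = t3 - 2s/9, d4 = t4 - 2s/9
  have hd1 : t1 - s/3 ≥ 0 := by linarith
  have hfac : s - 3/2 - s*(t1 - s/3)/4 ≥ 0 := by nlinarith
  nlinarith [sq_nonneg (2*(t1 - s/3) + (t2 - (2 - 8*s/9)) + (t4 - 2*s/9)),
    sq_nonneg (t3 - 2*s/9), sq_nonneg (t4 - 2*s/9),
    mul_nonneg hd1 hfac, sub_nonneg.2 h4, hs, hs1.le]
end

section
/- For real numbers $t_1, t_2, t_4$ with $1 \geq t_1 \geq t_2 \geq t_4 > 0$, $\frac{\sqrt{3}}{3} \leq t_1 < 1$, and $t_1 + \frac{1}{2}t_2 \geq 1$, one has $\frac{\sqrt{3}}{4}(t_1^2 + t_2^2 + 2t_4^2) + \left(1 - t_1 - \frac{1}{4}t_2 - \frac{3}{4}t_4 + \frac{\sqrt{3}}{6}\right)\left(1 - \frac{\sqrt{3}}{2}t_2 - \frac{\sqrt{3}}{2}t_4\right) \geq \frac{2}{19} + \frac{25\sqrt{3}}{114} > \frac{\sqrt{3}}{4}$. -/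
theorem stmt_12 (t1 t2 t4 : ℝ) (h1 : 1 ≥ t1) (h2 : t1 ≥ t2) (h3 : t2 ≥ t4)
    (h4 : t4 > 0) (h5 : Real.sqrt 3 / 3 ≤ t1) (h6 : t1 < 1)
    (h7 : t1 + (1/2) * t2 ≥ 1) :
    Real.sqrt 3 / 4 * (t1^2 + t2^2 + 2 * t4^2) +
        (1 - t1 - (1/4) * t2 - (3/4) * t4 + Real.sqrt 3 / 6) *
          (1 - Real.sqrt 3 / 2 * t2 - Real.sqrt 3 / 2 * t4)
      ≥ 2/19 + 25 * Real.sqrt 3 / 114 ∧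
    2/19 + 25 * Real.sqrt 3 / 114 > Real.sqrt 3 / 4 := by
  set s := Real.sqrt 3 with hs_def
  have hs2 : s ^ 2 = 3 := Real.sq_sqrt (by norm_num)
  have hs0 : 0 ≤ s := Real.sqrt_nonneg 3
  have hs13 : s ≥ 13/10 := by nlinarith [hs2, hs0]
  constructor
  · have key : s / 4 * (t1^2 + t2^2 + 2 * t4^2) +
        (1 - t1 - (1/4) * t2 - (3/4) * t4 + s / 6) *
          (1 - s / 2 * t2 - s / 2 * t4)
        = (2/19 + 25 * s / 114)
          + ((12*s - 15)/19) * (t1 + (1/2) * t2 - 1)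
          + s * ((1/4) * (t1 + t2 + t4 - (72 + 8*s)/57)^2
                 + (1/8) * (t2 - (42 - 8*s)/57)^2
                 + (5/8) * (t4 - (12*s - 6)/57)^2) := by
      linear_combination (-(11:ℝ)/228*t2 + 1/4*t4 - 2/57 - 2/57*s + 4/57*t1) * hs2
    rw [key]
    have hlam : (0:ℝ) ≤ (12*s - 15)/19 := by nlinarith
    have hg : (0:ℝ) ≤ t1 + (1/2) * t2 - 1 := by linarith
    have hQ : (0:ℝ) ≤ (1/4) * (t1 + t2 + t4 - (72 + 8*s)/57)^2
                 + (1/8) * (t2 - (42 - 8*s)/57)^2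
                 + (5/8) * (t4 - (12*s - 6)/57)^2 := by positivity
    nlinarith [mul_nonneg hlam hg, mul_nonneg hs0 hQ]
  · nlinarith [hs2, hs0]
end

section
/- For real numbers $t_1, t_2, t_3, t_4$ with $t_1 \geq t_2 \geq t_3 \geq t_4 > 0$, $\frac{2}{5} \leq t_1 < \frac{\sqrt{3}}{3}$, and $t_1 + t_3 < 1$, one has $\frac{\sqrt{3}}{4}(t_1^2 + t_2^2 + t_3^2 + t_4^2) + \left(1 + \frac{1}{4}t_2 - \frac{3}{4}t_4 - \frac{\sqrt{3}}{6}\right)\left(1 - \frac{\sqrt{3}}{2}t_2 - \frac{\sqrt{3}}{2}t_4\right) \geq \frac{38}{35} - \frac{79\sqrt{3}}{210} > \frac{\sqrt{3}}{4}$. -/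
theorem stmt_13 (t1 t2 t3 t4 : ℝ) (h1 : t1 ≥ t2) (h2 : t2 ≥ t3) (h3 : t3 ≥ t4)
    (h4 : t4 > 0) (h5 : 2/5 ≤ t1) (h6 : t1 < Real.sqrt 3 / 3)
    (h7 : t1 + t3 < 1) :
    Real.sqrt 3 / 4 * (t1^2 + t2^2 + t3^2 + t4^2) +
        (1 + (1/4) * t2 - (3/4) * t4 - Real.sqrt 3 / 6) *
          (1 - Real.sqrt 3 / 2 * t2 - Real.sqrt 3 / 2 * t4)
      ≥ 38/35 - 79 * Real.sqrt 3 / 210 ∧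
    38/35 - 79 * Real.sqrt 3 / 210 > Real.sqrt 3 / 4 := by
  set s := Real.sqrt 3 with hs
  have hs2 : s ^ 2 = 3 := Real.sq_sqrt (by norm_num)
  have hsnn : (0:ℝ) ≤ s := Real.sqrt_nonneg 3
  have hslb : (1.7320508 : ℝ) < s := by
    rw [hs, show (1.7320508:ℝ) = Real.sqrt (1.7320508^2) from
      (Real.sqrt_sq (by norm_num)).symm]
    exact Real.sqrt_lt_sqrt (by positivity) (by norm_num)
  have hsub : s < 1.7320509 := by
    rw [hs, show (1.7320509:ℝ) = Real.sqrt (1.7320509^2) from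
      (Real.sqrt_sq (by norm_num)).symm]
    exact Real.sqrt_lt_sqrt (by norm_num) (by norm_num)
  have ht2 : 0 < t2 := lt_of_lt_of_le h4 (le_trans h3 h2)
  have hA : (0:ℝ) ≤ s * (20/21*s - 5/7) * (t1^2 - 4/25) := by
    apply mul_nonneg (mul_nonneg hsnn (by nlinarith)) (by nlinarith)
  have hB : (0:ℝ) ≤ s * (12/7 - 20/21*s) * (t1^2 - t2^2) := by
    apply mul_nonneg (mul_nonneg hsnn (by nlinarith)) (by nlinarith)
  have hC : (0:ℝ) ≤ s * (t3^2 - t4^2) := by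
    apply mul_nonneg hsnn (by nlinarith)
  have hD : (0:ℝ) ≤ (3/7*s - 5/7) * (t2 - 2/5)^2 := by
    apply mul_nonneg (by nlinarith) (sq_nonneg _)
  have hE : (0:ℝ) ≤ s * (t4 - 8/35 - 2/21*s)^2 := mul_nonneg hsnn (sq_nonneg _)
  have hF : (0:ℝ) ≤ s * ((t2 - 2/5) + (t4 - 8/35 - 2/21*s))^2 :=
    mul_nonneg hsnn (sq_nonneg _)
  constructor
  · have key : s / 4 * (t1^2 + t2^2 + t3^2 + t4^2) +
        (1 + (1/4) * t2 - (3/4) * t4 - s / 6) * (1 - s / 2 * t2 - s / 2 * t4)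
        = (38/35 - 79 * s / 210)
          + (1/4) * (s * (20/21*s - 5/7) * (t1^2 - 4/25))
          + (1/4) * (s * (12/7 - 20/21*s) * (t1^2 - t2^2))
          + (1/4) * (s * (t3^2 - t4^2))
          + (3/7*s - 5/7) * (t2 - 2/5)^2
          + (3/4) * (s * (t4 - 8/35 - 2/21*s)^2)
          + (1/8) * (s * ((t2 - 2/5) + (t4 - 8/35 - 2/21*s))^2) := by
      linear_combination (-1/105 + t4/4 + 3/28*t2 - 5/21*t2^2 - s/126) * hs2
    rw [key]; linarith
  · nlinarith [hsub]
end

section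
/- For real numbers $t_1, t_2, t_3, t_4, t_5$ with $t_1 \geq t_2 \geq t_3 \geq t_4 \geq t_5 > 0$, $\frac{2}{5} \leq t_1 < \frac{\sqrt{3}}{3}$, $t_1 + t_3 \geq 1$, $t_3 + t_5 < 1$, and $t_1 + t_4 < 1$, one has $\frac{\sqrt{3}}{4}(t_1^2 + t_2^2 + t_3^2 + t_4^2 + t_5^2) + \left(1 - t_3 - \frac{1}{4}t_1 - \frac{3}{4}t_5 + \frac{\sqrt{3}}{6}\right)\left(1 - \frac{\sqrt{3}}{2}t_1 - \frac{\sqrt{3}}{2}t_5\right) \geq \frac{145\sqrt{3}}{168} - 1 > \frac{\sqrt{3}}{4}$. -/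
theorem stmt_14 (t1 t2 t3 t4 t5 : ℝ) (h1 : t1 ≥ t2) (h2 : t2 ≥ t3) (h3 : t3 ≥ t4)
    (h4 : t4 ≥ t5) (h5 : t5 > 0) (h6 : 2/5 ≤ t1) (h7 : t1 < Real.sqrt 3 / 3)
    (h8 : t1 + t3 ≥ 1) (h9 : t3 + t5 < 1) (h10 : t1 + t4 < 1) :
    Real.sqrt 3 / 4 * (t1^2 + t2^2 + t3^2 + t4^2 + t5^2) +
        (1 - t3 - (1/4) * t1 - (3/4) * t5 + Real.sqrt 3 / 6) *
          (1 - Real.sqrt 3 / 2 * t1 - Real.sqrt 3 / 2 * t5)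
      ≥ 145 * Real.sqrt 3 / 168 - 1 ∧
    145 * Real.sqrt 3 / 168 - 1 > Real.sqrt 3 / 4 := by
  have hs : Real.sqrt 3 ^ 2 = 3 := Real.sq_sqrt (by norm_num)
  have hl : Real.sqrt 3 > 1.7 := by nlinarith [Real.sqrt_nonneg 3]
  set s := Real.sqrt 3 with hsdef
  have hs0 : (0:ℝ) ≤ s := Real.sqrt_nonneg 3
  have hX : 0 ≤ s/3 - t1 := by linarith
  have hU : 0 ≤ t1 + t3 - 1 := by linarith
  have c1 : 0 ≤ s/4*((t2-t3)*(t2+t3)) := by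
    apply mul_nonneg (by linarith)
    apply mul_nonneg (by linarith) (by linarith)
  have c2 : 0 ≤ s/4*((t4-t5)*(t4+t5)) := by
    apply mul_nonneg (by linarith)
    apply mul_nonneg (by linarith) (by linarith)
  have c3 : 0 ≤ s/2*((t1+t3-1) + (t5 - 4*s/21)/2)^2 :=
    mul_nonneg (by linarith) (sq_nonneg _)
  have c4 : 0 ≤ 3*s/4*(t5 - 4*s/21)^2 := mul_nonneg (by linarith) (sq_nonneg _)
  have c5 : 0 ≤ (s - 17/14)*(t1 + t3 - 1) := mul_nonneg (by linarith) hU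
  have c6 : 0 ≤ s/2*((s/3 - t1)*(t1 + t3 - 1)) := by
    exact mul_nonneg (by linarith) (mul_nonneg hX hU)
  have c7 : 0 ≤ 3*s/8*(s/3 - t1)^2 := mul_nonneg (by linarith) (sq_nonneg _)
  have c8 : 0 ≤ (s - 5/4)*(s/3 - t1) := mul_nonneg (by linarith) hX
  constructor
  · have key : s / 4 * (t1^2 + t2^2 + t3^2 + t4^2 + t5^2) +
        (1 - t3 - (1/4) * t1 - (3/4) * t5 + s / 6) * (1 - s / 2 * t1 - s / 2 * t5)
        - (145 * s / 168 - 1) =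
        s/4*((t2-t3)*(t2+t3)) + s/4*((t4-t5)*(t4+t5))
        + s/2*((t1+t3-1) + (t5 - 4*s/21)/2)^2 + 3*s/4*(t5 - 4*s/21)^2
        + (s - 17/14)*(t1 + t3 - 1) + s/2*((s/3 - t1)*(t1 + t3 - 1))
        + 3*s/8*(s/3 - t1)^2 + (s - 5/4)*(s/3 - t1) := by
      linear_combination ((-11/42) + (1/4)*t5 - (1/14)*t3 + (2/21)*t1 - (37/504)*s) * hs
    linarith
  · nlinarith
end

section
/- For real numbers $t_1, t_2, t_3, t_4, t_5$ with $t_1 \geq t_2 \geq t_3 \geq t_4 \geq t_5 > 0$, $\frac{2}{5} \leq t_1 < \frac{\sqrt{3}}{3}$, $t_3 + t_5 < 1$, and $t_1 + t_4 \geq 1$, one has $\frac{\sqrt{3}}{4}(t_1^2 + t_2^2 + t_3^2 + t_4^2 + t_5^2) + \left(1 - t_3 + \frac{1}{4}t_1 - \frac{3}{4}t_5 - \frac{\sqrt{3}}{6}\right)\left(1 - \frac{\sqrt{3}}{2}t_1 - \frac{\sqrt{3}}{2}t_5\right) \geq \frac{17\sqrt{3}}{15} - \frac{3}{2} > \frac{\sqrt{3}}{4}$.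 -/
set_option maxHeartbeats 1000000 in
theorem stmt_15 (t1 t2 t3 t4 t5 : ℝ) (h1 : t1 ≥ t2) (h2 : t2 ≥ t3) (h3 : t3 ≥ t4)
    (h4 : t4 ≥ t5) (h5 : t5 > 0) (h6 : 2/5 ≤ t1) (h7 : t1 < Real.sqrt 3 / 3)
    (h8 : t3 + t5 < 1) (h9 : t1 + t4 ≥ 1) :
    Real.sqrt 3 / 4 * (t1^2 + t2^2 + t3^2 + t4^2 + t5^2) +
        (1 - t3 + (1/4) * t1 - (3/4) * t5 - Real.sqrt 3 / 6) *
          (1 - Real.sqrt 3 / 2 * t1 - Real.sqrt 3 / 2 * t5)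
      ≥ 17 * Real.sqrt 3 / 15 - 3/2 ∧
    17 * Real.sqrt 3 / 15 - 3/2 > Real.sqrt 3 / 4 := by
  set s := Real.sqrt 3 with hsdef
  have hs0 : (0:ℝ) ≤ s := Real.sqrt_nonneg 3
  have hs : s ^ 2 = 3 := Real.sq_sqrt (by norm_num)
  have hs3 : s ^ 3 = 3 * s := by
    calc s ^ 3 = s ^ 2 * s := by ring
    _ = 3 * s := by rw [hs]
  have hs32 : s ≥ 3/2 := by nlinarith
  have hu : t1 + t3 - 1 ≥ 0 := by linarith
  have hw : s/3 - t1 ≥ 0 := by linarith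
  have hst1 : 1 - s * t1 ≥ 0 := by nlinarith
  have h1t1 : (0:ℝ) ≤ 1 - t1 := by nlinarith
  have ht3 : (0:ℝ) ≤ t3 := by linarith
  have hT1 : s/4 * (t2^2 - t3^2) ≥ 0 := by
    have : t3^2 ≤ t2^2 := by nlinarith
    nlinarith
  have hT2 : s/4 * (t4^2 - (1-t1)^2) ≥ 0 := by
    have h14 : (1:ℝ) - t1 ≤ t4 := by linarith
    have : (1-t1)^2 ≤ t4^2 := by nlinarith
    nlinarith
  have hT3 : 5*s/8 * (t5 - s/5)^2 ≥ 0 := by positivity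
  have hT4 : (s - 3/2) * (t1 + t3 - 1) ≥ 0 := mul_nonneg (by linarith) hu
  have hT5 : s/2 * ((t1 + t3 - 1) * t5) ≥ 0 :=
    mul_nonneg (by linarith) (mul_nonneg hu h5.le)
  have hT6 : s/2 * (t1 + t3 - 1)^2 ≥ 0 := by positivity
  have hT7 : (3*s/2 - 9/4) * (s/3 - t1) ≥ 0 := mul_nonneg (by linarith) hw
  have hT8 : s/4 * ((s/3 - t1) * t5) ≥ 0 :=
    mul_nonneg (by linarith) (mul_nonneg hw h5.le)
  have hT9 : 3*s/8 * (s/3 - t1)^2 ≥ 0 := by positivity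
  have hT10 : (1/2 : ℝ) * ((t1 + t3 - 1) * (1 - s * t1)) ≥ 0 :=
    mul_nonneg (by norm_num) (mul_nonneg hu hst1)
  have key : s / 4 * (t1^2 + t2^2 + t3^2 + t4^2 + t5^2) +
        (1 - t3 + (1/4) * t1 - (3/4) * t5 - s / 6) *
          (1 - s / 2 * t1 - s / 2 * t5) - (17 * s / 15 - 3/2) =
      s/4 * (t2^2 - t3^2) + s/4 * (t4^2 - (1-t1)^2) + 5*s/8 * (t5 - s/5)^2 +
      (s - 3/2) * (t1 + t3 - 1) + s/2 * ((t1 + t3 - 1) * t5) + s/2 * (t1 + t3 - 1)^2 +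
      (3*s/2 - 9/4) * (s/3 - t1) + s/4 * ((s/3 - t1) * t5) + 3*s/8 * (s/3 - t1)^2 +
      (1/2 : ℝ) * ((t1 + t3 - 1) * (1 - s * t1)) := by
    linear_combination (-s/15 + t1/3 + t5/4 - 1/2) * hs
  have h327 : (s - 90/53) * (s + 90/53) = 327/2809 := by linear_combination hs
  have hgt : s > 90/53 := by
    by_contra hcon
    push_neg at hcon
    have h1 : 0 ≤ -(s - 90/53) := by linarith
    have h2 : (0:ℝ) ≤ s + 90/53 := by linarith
    have h3 : 0 ≤ -(s - 90/53) * (s + 90/53) := mul_nonneg h1 h2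
    nlinarith [h3, h327]
  constructor
  · rw [ge_iff_le, ← sub_nonneg, key]
    exact add_nonneg (add_nonneg (add_nonneg (add_nonneg (add_nonneg (add_nonneg
      (add_nonneg (add_nonneg (add_nonneg hT1 hT2) hT3) hT4) hT5) hT6) hT7) hT8) hT9) hT10
  · linarith
end

section
/- Four isosceles right triangles, each with leg length strictly greater than $\frac{1}{2}$, legs axis-parallel, cannot be packed with pairwise disjoint interiors inside the closed unit square $[0,1]^2$ (using translations and $180°$ rotations). -/
/-- The isosceles right triangle with legs of length `t` parallel to the
coordinate axes, with right-angle vertex at the origin. -/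
def rightIsoTri (t : ℝ) : Set (ℝ × ℝ) :=
  {p | 0 ≤ p.1 ∧ 0 ≤ p.2 ∧ p.1 + p.2 ≤ t}

/-- Witness property for an "up" (translated) triangle: the open triangle with
lower-left corner `(a,b)` and leg `t` is contained in `X`. -/
def upW (X : Set (ℝ × ℝ)) (t a b : ℝ) : Prop :=
  ∀ p : ℝ × ℝ, a < p.1 → b < p.2 → p.1 + p.2 < a + b + t → p ∈ X

/-- Witness property for a "down" (rotated) triangle, in reflected coordinates
`a = 1 - c`, `b = 1 - d` where `(c,d)` is the top-right corner. -/
def dnW (X : Set (ℝ × ℝ)) (t a b : ℝ) : Prop :=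
  ∀ p : ℝ × ℝ, p.1 < 1 - a → p.2 < 1 - b → (1 - a) + (1 - b) - t < p.1 + p.2 → p ∈ X

def bnd (t a b : ℝ) : Prop := 0 ≤ a ∧ 0 ≤ b ∧ a + t ≤ 1 ∧ b + t ≤ 1

lemma isOpen_upO (a b s : ℝ) :
    IsOpen {p : ℝ × ℝ | a < p.1 ∧ b < p.2 ∧ p.1 + p.2 < s} := by
  have h1 : IsOpen {p : ℝ × ℝ | a < p.1} := isOpen_lt continuous_const continuous_fst
  have h2 : IsOpen {p : ℝ × ℝ | b < p.2} := isOpen_lt continuous_const continuous_snd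
  have h3 : IsOpen {p : ℝ × ℝ | p.1 + p.2 < s} :=
    isOpen_lt (continuous_fst.add continuous_snd) continuous_const
  exact h1.inter (h2.inter h3)

lemma isOpen_dnO (c d s : ℝ) :
    IsOpen {p : ℝ × ℝ | p.1 < c ∧ p.2 < d ∧ s < p.1 + p.2} := by
  have h1 : IsOpen {p : ℝ × ℝ | p.1 < c} := isOpen_lt continuous_fst continuous_const
  have h2 : IsOpen {p : ℝ × ℝ | p.2 < d} := isOpen_lt continuous_snd continuous_const
  have h3 : IsOpen {p : ℝ × ℝ | s < p.1 + p.2} :=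
    isOpen_lt continuous_const (continuous_fst.add continuous_snd)
  exact h1.inter (h2.inter h3)

lemma pair_uu {X1 X2 : Set (ℝ × ℝ)} {t1 a1 b1 t2 a2 b2 : ℝ}
    (ht1 : 1/2 < t1) (ht2 : 1/2 < t2) (hb1 : bnd t1 a1 b1) (hb2 : bnd t2 a2 b2)
    (hw1 : upW X1 t1 a1 b1) (hw2 : upW X2 t2 a2 b2) (hd : Disjoint X1 X2) :
    a1 + b1 + t1 ≤ a2 + b2 ∨ a2 + b2 + t2 ≤ a1 + b1 := by
  obtain ⟨hA1, hB1, hA1', hB1'⟩ := hb1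
  obtain ⟨hA2, hB2, hA2', hB2'⟩ := hb2
  by_contra hcon
  push_neg at hcon
  obtain ⟨hc1, hc2⟩ := hcon
  have hM1 : max a1 a2 + max b1 b2 < a1 + b1 + t1 := by
    rcases max_choice a1 a2 with h | h <;> rcases max_choice b1 b2 with h' | h' <;>
      rw [h, h'] <;> linarith
  have hM2 : max a1 a2 + max b1 b2 < a2 + b2 + t2 := by
    rcases max_choice a1 a2 with h | h <;> rcases max_choice b1 b2 with h' | h' <;>
      rw [h, h'] <;> linarith
  set δ := (min (a1 + b1 + t1) (a2 + b2 + t2) - (max a1 a2 + max b1 b2)) / 3 with hδdef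
  have hmm : max a1 a2 + max b1 b2 < min (a1 + b1 + t1) (a2 + b2 + t2) := lt_min hM1 hM2
  have hδ : 0 < δ := by rw [hδdef]; linarith
  have hmin1 : min (a1 + b1 + t1) (a2 + b2 + t2) ≤ a1 + b1 + t1 := min_le_left _ _
  have hmin2 : min (a1 + b1 + t1) (a2 + b2 + t2) ≤ a2 + b2 + t2 := min_le_right _ _
  have hma1 : a1 ≤ max a1 a2 := le_max_left _ _
  have hma2 : a2 ≤ max a1 a2 := le_max_right _ _
  have hmb1 : b1 ≤ max b1 b2 := le_max_left _ _
  have hmb2 : b2 ≤ max b1 b2 := le_max_right _ _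
  have hp1 : ((max a1 a2 + δ, max b1 b2 + δ) : ℝ × ℝ) ∈ X1 :=
    hw1 (max a1 a2 + δ, max b1 b2 + δ) (by show a1 < max a1 a2 + δ; linarith)
      (by show b1 < max b1 b2 + δ; linarith)
      (by show max a1 a2 + δ + (max b1 b2 + δ) < a1 + b1 + t1; rw [hδdef]; linarith)
  have hp2 : ((max a1 a2 + δ, max b1 b2 + δ) : ℝ × ℝ) ∈ X2 :=
    hw2 (max a1 a2 + δ, max b1 b2 + δ) (by show a2 < max a1 a2 + δ; linarith)
      (by show b2 < max b1 b2 + δ; linarith)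
      (by show max a1 a2 + δ + (max b1 b2 + δ) < a2 + b2 + t2; rw [hδdef]; linarith)
  exact Set.disjoint_left.mp hd hp1 hp2

lemma pair_dd {X1 X2 : Set (ℝ × ℝ)} {t1 a1 b1 t2 a2 b2 : ℝ}
    (ht1 : 1/2 < t1) (ht2 : 1/2 < t2) (hb1 : bnd t1 a1 b1) (hb2 : bnd t2 a2 b2)
    (hw1 : dnW X1 t1 a1 b1) (hw2 : dnW X2 t2 a2 b2) (hd : Disjoint X1 X2) :
    a1 + b1 + t1 ≤ a2 + b2 ∨ a2 + b2 + t2 ≤ a1 + b1 := by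
  obtain ⟨hA1, hB1, hA1', hB1'⟩ := hb1
  obtain ⟨hA2, hB2, hA2', hB2'⟩ := hb2
  by_contra hcon
  push_neg at hcon
  obtain ⟨hc1, hc2⟩ := hcon
  have hM1 : (1 - a1) + (1 - b1) - t1 < min (1 - a1) (1 - a2) + min (1 - b1) (1 - b2) := by
    rcases min_choice (1 - a1) (1 - a2) with h | h <;>
      rcases min_choice (1 - b1) (1 - b2) with h' | h' <;> rw [h, h'] <;> linarith
  have hM2 : (1 - a2) + (1 - b2) - t2 < min (1 - a1) (1 - a2) + min (1 - b1) (1 - b2) := by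
    rcases min_choice (1 - a1) (1 - a2) with h | h <;>
      rcases min_choice (1 - b1) (1 - b2) with h' | h' <;> rw [h, h'] <;> linarith
  set δ := (min (1 - a1) (1 - a2) + min (1 - b1) (1 - b2) -
      max ((1 - a1) + (1 - b1) - t1) ((1 - a2) + (1 - b2) - t2)) / 3 with hδdef
  have hmm : max ((1 - a1) + (1 - b1) - t1) ((1 - a2) + (1 - b2) - t2) <
      min (1 - a1) (1 - a2) + min (1 - b1) (1 - b2) := max_lt hM1 hM2
  have hδ : 0 < δ := by rw [hδdef]; linarith
  have hmax1 : (1 - a1) + (1 - b1) - t1 ≤ max ((1 - a1) + (1 - b1) - t1) ((1 - a2) + (1 - b2) - t2) :=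
    le_max_left _ _
  have hmax2 : (1 - a2) + (1 - b2) - t2 ≤ max ((1 - a1) + (1 - b1) - t1) ((1 - a2) + (1 - b2) - t2) :=
    le_max_right _ _
  have hma1 : min (1 - a1) (1 - a2) ≤ 1 - a1 := min_le_left _ _
  have hma2 : min (1 - a1) (1 - a2) ≤ 1 - a2 := min_le_right _ _
  have hmb1 : min (1 - b1) (1 - b2) ≤ 1 - b1 := min_le_left _ _
  have hmb2 : min (1 - b1) (1 - b2) ≤ 1 - b2 := min_le_right _ _
  have hp1 : ((min (1 - a1) (1 - a2) - δ, min (1 - b1) (1 - b2) - δ) : ℝ × ℝ) ∈ X1 :=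
    hw1 _ (by show min (1 - a1) (1 - a2) - δ < 1 - a1; linarith)
      (by show min (1 - b1) (1 - b2) - δ < 1 - b1; linarith)
      (by show (1 - a1) + (1 - b1) - t1 < min (1 - a1) (1 - a2) - δ + (min (1 - b1) (1 - b2) - δ)
          rw [hδdef]; linarith)
  have hp2 : ((min (1 - a1) (1 - a2) - δ, min (1 - b1) (1 - b2) - δ) : ℝ × ℝ) ∈ X2 :=
    hw2 _ (by show min (1 - a1) (1 - a2) - δ < 1 - a2; linarith)
      (by show min (1 - b1) (1 - b2) - δ < 1 - b2; linarith)
      (by show (1 - a2) + (1 - b2) - t2 < min (1 - a1) (1 - a2) - δ + (min (1 - b1) (1 - b2) - δ)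
          rw [hδdef]; linarith)
  exact Set.disjoint_left.mp hd hp1 hp2

lemma pair_ud {X1 X2 : Set (ℝ × ℝ)} {t1 a1 b1 t2 a2 b2 : ℝ}
    (ht1 : 1/2 < t1) (ht2 : 1/2 < t2) (hb1 : bnd t1 a1 b1) (hb2 : bnd t2 a2 b2)
    (hw1 : upW X1 t1 a1 b1) (hw2 : dnW X2 t2 a2 b2) (hd : Disjoint X1 X2) :
    a1 + b1 + (a2 + b2) + t1 + t2 ≤ 2 := by
  obtain ⟨hA1, hB1, hA1', hB1'⟩ := hb1
  obtain ⟨hA2, hB2, hA2', hB2'⟩ := hb2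
  by_contra hcon
  push_neg at hcon
  have hbox1 : a1 < 1 - a2 := by linarith
  have hbox2 : b1 < 1 - b2 := by linarith
  set L := max (a1 + b1) ((1 - a2) + (1 - b2) - t2) with hLdef
  set R := min ((1 - a2) + (1 - b2)) (a1 + b1 + t1) with hRdef
  have hLR : L < R :=
    max_lt (lt_min (by linarith) (by linarith)) (lt_min (by linarith) (by linarith))
  set m := (L + R) / 2 with hmdef
  have hmL : L < m := by rw [hmdef]; linarith
  have hmR : m < R := by rw [hmdef]; linarith
  have hL1 : a1 + b1 ≤ L := le_max_left _ _
  have hL2 : (1 - a2) + (1 - b2) - t2 ≤ L := le_max_right _ _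
  have hR1 : R ≤ (1 - a2) + (1 - b2) := min_le_left _ _
  have hR2 : R ≤ a1 + b1 + t1 := min_le_right _ _
  have hden : 0 < (1 - a2) + (1 - b2) - (a1 + b1) := by linarith
  set r := (m - (a1 + b1)) / ((1 - a2) + (1 - b2) - (a1 + b1)) with hrdef
  have hr0 : 0 < r := div_pos (by linarith) hden
  have hr1 : r < 1 := (div_lt_one hden).mpr (by linarith)
  have hrden : r * ((1 - a2) + (1 - b2) - (a1 + b1)) = m - (a1 + b1) :=
    div_mul_cancel₀ _ (ne_of_gt hden)
  set x := a1 + r * ((1 - a2) - a1) with hxdef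
  set y := b1 + r * ((1 - b2) - b1) with hydef
  have hx1 : a1 < x := by
    have := mul_pos hr0 (show (0:ℝ) < (1 - a2) - a1 by linarith)
    rw [hxdef]; linarith
  have hx2 : x < 1 - a2 := by
    have := mul_pos (show (0:ℝ) < 1 - r by linarith) (show (0:ℝ) < (1 - a2) - a1 by linarith)
    rw [hxdef]; nlinarith
  have hy1 : b1 < y := by
    have := mul_pos hr0 (show (0:ℝ) < (1 - b2) - b1 by linarith)
    rw [hydef]; linarith
  have hy2 : y < 1 - b2 := by
    have := mul_pos (show (0:ℝ) < 1 - r by linarith) (show (0:ℝ) < (1 - b2) - b1 by linarith)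
    rw [hydef]; nlinarith
  have hsum : x + y = m := by
    have e : x + y = (a1 + b1) + r * ((1 - a2) + (1 - b2) - (a1 + b1)) := by
      rw [hxdef, hydef]; ring
    rw [e, hrden]; ring
  have hp1 : ((x, y) : ℝ × ℝ) ∈ X1 :=
    hw1 (x, y) hx1 hy1 (by show x + y < a1 + b1 + t1; rw [hsum]; linarith)
  have hp2 : ((x, y) : ℝ × ℝ) ∈ X2 :=
    hw2 (x, y) hx2 hy2
      (by show (1 - a2) + (1 - b2) - t2 < x + y; rw [hsum]; linarith)
  exact Set.disjoint_left.mp hd hp1 hp2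

lemma three_same {t1 a1 b1 t2 a2 b2 t3 a3 b3 : ℝ}
    (ht1 : 1/2 < t1) (ht2 : 1/2 < t2) (ht3 : 1/2 < t3)
    (hb1 : bnd t1 a1 b1) (hb2 : bnd t2 a2 b2) (hb3 : bnd t3 a3 b3)
    (h12 : a1 + b1 + t1 ≤ a2 + b2 ∨ a2 + b2 + t2 ≤ a1 + b1)
    (h13 : a1 + b1 + t1 ≤ a3 + b3 ∨ a3 + b3 + t3 ≤ a1 + b1)
    (h23 : a2 + b2 + t2 ≤ a3 + b3 ∨ a3 + b3 + t3 ≤ a2 + b2) : False := by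
  obtain ⟨u1, v1, u1', v1'⟩ := hb1
  obtain ⟨u2, v2, u2', v2'⟩ := hb2
  obtain ⟨u3, v3, u3', v3'⟩ := hb3
  rcases h12 with h | h <;> rcases h13 with h' | h' <;> rcases h23 with h'' | h'' <;> linarith

lemma two_two {t1 a1 b1 t2 a2 b2 t3 a3 b3 t4 a4 b4 : ℝ}
    (ht1 : 1/2 < t1) (ht2 : 1/2 < t2) (ht3 : 1/2 < t3) (ht4 : 1/2 < t4)
    (hb1 : bnd t1 a1 b1) (hb2 : bnd t2 a2 b2) (hb3 : bnd t3 a3 b3) (hb4 : bnd t4 a4 b4)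
    (h12 : a1 + b1 + t1 ≤ a2 + b2 ∨ a2 + b2 + t2 ≤ a1 + b1)
    (h34 : a3 + b3 + t3 ≤ a4 + b4 ∨ a4 + b4 + t4 ≤ a3 + b3)
    (h13 : a1 + b1 + (a3 + b3) + t1 + t3 ≤ 2)
    (h14 : a1 + b1 + (a4 + b4) + t1 + t4 ≤ 2)
    (h23 : a2 + b2 + (a3 + b3) + t2 + t3 ≤ 2)
    (h24 : a2 + b2 + (a4 + b4) + t2 + t4 ≤ 2) : False := by
  obtain ⟨u1, v1, u1', v1'⟩ := hb1
  obtain ⟨u2, v2, u2', v2'⟩ := hb2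
  obtain ⟨u3, v3, u3', v3'⟩ := hb3
  obtain ⟨u4, v4, u4', v4'⟩ := hb4
  rcases h12 with h | h <;> rcases h34 with h' | h' <;> linarith

lemma classify {t : ℝ} (ht : 1/2 < t) {S : Set (ℝ × ℝ)}
    (hform : ∃ v : ℝ × ℝ, S = (fun p => p + v) '' rightIsoTri t ∨
      S = (fun p => -p + v) '' rightIsoTri t)
    (hsub : S ⊆ Set.Icc (0 : ℝ) 1 ×ˢ Set.Icc (0 : ℝ) 1) :
    ∃ a b : ℝ, bnd t a b ∧ (upW (interior S) t a b ∨ dnW (interior S) t a b) := by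
  obtain ⟨v, hS | hS⟩ := hform
  · -- translate: up triangle with corner v
    have hmem : ∀ q : ℝ × ℝ, q ∈ rightIsoTri t →
        q + v ∈ Set.Icc (0 : ℝ) 1 ×ˢ Set.Icc (0 : ℝ) 1 := by
      intro q hq; apply hsub; rw [hS]; exact ⟨q, hq, rfl⟩
    have h00 := hmem (0, 0) ⟨le_rfl, le_rfl, by show (0:ℝ) + 0 ≤ t; linarith⟩
    have hT0 := hmem (t, 0) ⟨by show (0:ℝ) ≤ t; linarith, le_rfl, by show t + 0 ≤ t; linarith⟩
    have h0T := hmem (0, t) ⟨le_rfl, by show (0:ℝ) ≤ t; linarith, by show 0 + t ≤ t; linarith⟩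
    have e1 : (0:ℝ) ≤ v.1 := by have := h00.1.1; simpa using this
    have e2 : (0:ℝ) ≤ v.2 := by have := h00.2.1; simpa using this
    have e3 : v.1 + t ≤ 1 := by have := hT0.1.2; simp at this; linarith
    have e4 : v.2 + t ≤ 1 := by have := h0T.2.2; simp at this; linarith
    refine ⟨v.1, v.2, ⟨e1, e2, e3, e4⟩, Or.inl ?_⟩
    intro p hp1 hp2 hp3
    have hOsub : {q : ℝ × ℝ | v.1 < q.1 ∧ v.2 < q.2 ∧ q.1 + q.2 < v.1 + v.2 + t} ⊆ S := by
      intro q hq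
      rw [hS]
      refine ⟨q - v, ⟨?_, ?_, ?_⟩, ?_⟩
      · show (0:ℝ) ≤ (q - v).1
        simp only [Prod.fst_sub]; linarith [hq.1]
      · show (0:ℝ) ≤ (q - v).2
        simp only [Prod.snd_sub]; linarith [hq.2.1]
      · show (q - v).1 + (q - v).2 ≤ t
        simp only [Prod.fst_sub, Prod.snd_sub]; linarith [hq.2.2]
      · show q - v + v = q
        abel
    exact interior_maximal hOsub (isOpen_upO _ _ _) ⟨hp1, hp2, hp3⟩
  · -- rotated: down triangle with top corner v
    have hmem : ∀ q : ℝ × ℝ, q ∈ rightIsoTri t →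
        -q + v ∈ Set.Icc (0 : ℝ) 1 ×ˢ Set.Icc (0 : ℝ) 1 := by
      intro q hq; apply hsub; rw [hS]; exact ⟨q, hq, rfl⟩
    have h00 := hmem (0, 0) ⟨le_rfl, le_rfl, by show (0:ℝ) + 0 ≤ t; linarith⟩
    have hT0 := hmem (t, 0) ⟨by show (0:ℝ) ≤ t; linarith, le_rfl, by show t + 0 ≤ t; linarith⟩
    have h0T := hmem (0, t) ⟨le_rfl, by show (0:ℝ) ≤ t; linarith, by show 0 + t ≤ t; linarith⟩
    have e1 : v.1 ≤ 1 := by have := h00.1.2; simpa using this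
    have e2 : v.2 ≤ 1 := by have := h00.2.2; simpa using this
    have e3 : (0:ℝ) ≤ v.1 - t := by have := hT0.1.1; simp at this; linarith
    have e4 : (0:ℝ) ≤ v.2 - t := by have := h0T.2.1; simp at this; linarith
    refine ⟨1 - v.1, 1 - v.2, ⟨by linarith, by linarith, by linarith, by linarith⟩, Or.inr ?_⟩
    intro p hp1 hp2 hp3
    have hOsub : {q : ℝ × ℝ | q.1 < v.1 ∧ q.2 < v.2 ∧ v.1 + v.2 - t < q.1 + q.2} ⊆ S := by
      intro q hq
      rw [hS]
      refine ⟨v - q, ⟨?_, ?_, ?_⟩, ?_⟩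
      · show (0:ℝ) ≤ (v - q).1
        simp only [Prod.fst_sub]; linarith [hq.1]
      · show (0:ℝ) ≤ (v - q).2
        simp only [Prod.snd_sub]; linarith [hq.2.1]
      · show (v - q).1 + (v - q).2 ≤ t
        simp only [Prod.fst_sub, Prod.snd_sub]; linarith [hq.2.2]
      · show -(v - q) + v = q
        abel
    refine interior_maximal hOsub (isOpen_dnO _ _ _) ⟨by linarith, by linarith, by linarith⟩

/-- Four isosceles right triangles with axis-parallel legs, each of leg length
greater than `1/2`, cannot be packed (via translations or 180° rotations
followed by translations) with pairwise disjoint interiors in the closed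
unit square. -/
theorem stmt_16 :
    ¬ ∃ (t : Fin 4 → ℝ) (S : Fin 4 → Set (ℝ × ℝ)),
      (∀ i, t i > 1/2) ∧
      (∀ i, ∃ v : ℝ × ℝ,
        S i = (fun p => p + v) '' rightIsoTri (t i) ∨
        S i = (fun p => -p + v) '' rightIsoTri (t i)) ∧
      (∀ i, S i ⊆ Set.Icc (0 : ℝ) 1 ×ˢ Set.Icc (0 : ℝ) 1) ∧
      (∀ i j, i ≠ j → Disjoint (interior (S i)) (interior (S j))) := by
  rintro ⟨t, S, ht, hform, hsub, hdisj⟩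
  have key : ∀ i, ∃ a b : ℝ, bnd (t i) a b ∧
      (upW (interior (S i)) (t i) a b ∨ dnW (interior (S i)) (t i) a b) :=
    fun i => classify (ht i) (hform i) (hsub i)
  choose a b hbd hw using key
  have h3u : ∀ i j k : Fin 4, i ≠ j → i ≠ k → j ≠ k →
      upW (interior (S i)) (t i) (a i) (b i) →
      upW (interior (S j)) (t j) (a j) (b j) →
      upW (interior (S k)) (t k) (a k) (b k) → False := fun i j k hij hik hjk hi hj hk =>
    three_same (ht i) (ht j) (ht k) (hbd i) (hbd j) (hbd k)
      (pair_uu (ht i) (ht j) (hbd i) (hbd j) hi hj (hdisj i j hij))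
      (pair_uu (ht i) (ht k) (hbd i) (hbd k) hi hk (hdisj i k hik))
      (pair_uu (ht j) (ht k) (hbd j) (hbd k) hj hk (hdisj j k hjk))
  have h3d : ∀ i j k : Fin 4, i ≠ j → i ≠ k → j ≠ k →
      dnW (interior (S i)) (t i) (a i) (b i) →
      dnW (interior (S j)) (t j) (a j) (b j) →
      dnW (interior (S k)) (t k) (a k) (b k) → False := fun i j k hij hik hjk hi hj hk =>
    three_same (ht i) (ht j) (ht k) (hbd i) (hbd j) (hbd k)
      (pair_dd (ht i) (ht j) (hbd i) (hbd j) hi hj (hdisj i j hij))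
      (pair_dd (ht i) (ht k) (hbd i) (hbd k) hi hk (hdisj i k hik))
      (pair_dd (ht j) (ht k) (hbd j) (hbd k) hj hk (hdisj j k hjk))
  have h22 : ∀ i j k l : Fin 4, i ≠ j → i ≠ k → i ≠ l → j ≠ k → j ≠ l → k ≠ l →
      upW (interior (S i)) (t i) (a i) (b i) →
      upW (interior (S j)) (t j) (a j) (b j) →
      dnW (interior (S k)) (t k) (a k) (b k) →
      dnW (interior (S l)) (t l) (a l) (b l) → False :=
    fun i j k l hij hik hil hjk hjl hkl hi hj hk hl =>
    two_two (ht i) (ht j) (ht k) (ht l) (hbd i) (hbd j) (hbd k) (hbd l)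
      (pair_uu (ht i) (ht j) (hbd i) (hbd j) hi hj (hdisj i j hij))
      (pair_dd (ht k) (ht l) (hbd k) (hbd l) hk hl (hdisj k l hkl))
      (pair_ud (ht i) (ht k) (hbd i) (hbd k) hi hk (hdisj i k hik))
      (pair_ud (ht i) (ht l) (hbd i) (hbd l) hi hl (hdisj i l hil))
      (pair_ud (ht j) (ht k) (hbd j) (hbd k) hj hk (hdisj j k hjk))
      (pair_ud (ht j) (ht l) (hbd j) (hbd l) hj hl (hdisj j l hjl))
  rcases hw 0 with h0 | h0 <;> rcases hw 1 with h1 | h1 <;>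
    rcases hw 2 with h2 | h2 <;> rcases hw 3 with h3 | h3 <;>
    first
    | exact h3u 0 1 2 (by decide) (by decide) (by decide) h0 h1 h2
    | exact h3u 0 1 3 (by decide) (by decide) (by decide) h0 h1 h3
    | exact h3u 0 2 3 (by decide) (by decide) (by decide) h0 h2 h3
    | exact h3u 1 2 3 (by decide) (by decide) (by decide) h1 h2 h3
    | exact h3d 0 1 2 (by decide) (by decide) (by decide) h0 h1 h2
    | exact h3d 0 1 3 (by decide) (by decide) (by decide) h0 h1 h3
    | exact h3d 0 2 3 (by decide) (by decide) (by decide) h0 h2 h3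
    | exact h3d 1 2 3 (by decide) (by decide) (by decide) h1 h2 h3
    | exact h22 0 1 2 3 (by decide) (by decide) (by decide) (by decide) (by decide) (by decide) h0 h1 h2 h3
    | exact h22 0 2 1 3 (by decide) (by decide) (by decide) (by decide) (by decide) (by decide) h0 h2 h1 h3
    | exact h22 0 3 1 2 (by decide) (by decide) (by decide) (by decide) (by decide) (by decide) h0 h3 h1 h2
    | exact h22 1 2 0 3 (by decide) (by decide) (by decide) (by decide) (by decide) (by decide) h1 h2 h0 h3
    | exact h22 1 3 0 2 (by decide) (by decide) (by decide) (by decide) (by decide) (by decide) h1 h3 h0 h2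
    | exact h22 2 3 0 1 (by decide) (by decide) (by decide) (by decide) (by decide) (by decide) h2 h3 h0 h1
end
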